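/- arXiv:1907.00712 — 2 statements merged into one kernel-verified Lean document; each statement's English description precedes it below -/
import Mathlib

section
/- For all x in (0, π], x − 3·sin(x)/(2+cos(x)) ≤ (1/92)·x^5. -/
open Real

lemma nonneg_of_deriv (f f' : ℝ → ℝ) (h0 : f 0 = 0)
    (hd : ∀ y : ℝ, HasDerivAt f (f' y) y)
    (hp : ∀ y : ℝ, 0 ≤ y → 0 ≤ f' y) {x : ℝ} (hx : 0 ≤ x) : 0 ≤ f x := by
  have hm : MonotoneOn f (Set.Ici 0) := by
    apply monotoneOn_of_deriv_nonneg (convex_Ici 0)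
    · exact fun y _ => (hd y).continuousAt.continuousWithinAt
    · exact fun y _ => (hd y).differentiableAt.differentiableWithinAt
    · intro y hy
      rw [(hd y).deriv]
      exact hp y (le_of_lt (by simpa using hy))
  have := hm Set.self_mem_Ici (by exact hx) hx
  simpa [h0] using this

lemma ts1 (x : ℝ) (hx : 0 ≤ x) : Real.sin x ≤ x := Real.sin_le hx

lemma tc2 (x : ℝ) (_hx : 0 ≤ x) : 1 - x ^ 2 / 2 ≤ Real.cos x :=
  Real.one_sub_sq_div_two_le_cos

lemma ts3l (x : ℝ) (hx : 0 ≤ x) : x - x ^ 3 / 6 ≤ Real.sin x := by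
  have key : 0 ≤ (fun y : ℝ => Real.sin y - (y - y ^ 3 / 6)) x := by
    refine nonneg_of_deriv (fun y : ℝ => Real.sin y - (y - y ^ 3 / 6)) (fun y : ℝ => Real.cos y - (1 - y ^ 2 / 2)) (by norm_num) (fun y => ?_) (fun y hy => ?_) hx
    · exact ((Real.hasDerivAt_sin y).sub ((hasDerivAt_id' (x := y)).sub ((hasDerivAt_pow 3 y).div_const 6))).congr_deriv (by push_cast; ring)
    · have := tc2 y hy
      linarith
  dsimp only at key
  linarith

lemma tc4u (x : ℝ) (hx : 0 ≤ x) : Real.cos x ≤ 1 - x ^ 2 / 2 + x ^ 4 / 24 := by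
  have key : 0 ≤ (fun y : ℝ => (1 - y ^ 2 / 2 + y ^ 4 / 24) - Real.cos y) x := by
    refine nonneg_of_deriv (fun y : ℝ => (1 - y ^ 2 / 2 + y ^ 4 / 24) - Real.cos y) (fun y : ℝ => Real.sin y - (y - y ^ 3 / 6)) (by norm_num) (fun y => ?_) (fun y hy => ?_) hx
    · exact ((((hasDerivAt_const y (1:ℝ)).sub ((hasDerivAt_pow 2 y).div_const 2)).add ((hasDerivAt_pow 4 y).div_const 24)).sub (Real.hasDerivAt_cos y)).congr_deriv (by push_cast; ring)
    · have := ts3l y hy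
      linarith
  dsimp only at key
  linarith

lemma ts5u (x : ℝ) (hx : 0 ≤ x) : Real.sin x ≤ x - x ^ 3 / 6 + x ^ 5 / 120 := by
  have key : 0 ≤ (fun y : ℝ => (y - y ^ 3 / 6 + y ^ 5 / 120) - Real.sin y) x := by
    refine nonneg_of_deriv (fun y : ℝ => (y - y ^ 3 / 6 + y ^ 5 / 120) - Real.sin y) (fun y : ℝ => (1 - y ^ 2 / 2 + y ^ 4 / 24) - Real.cos y) (by norm_num) (fun y => ?_) (fun y hy => ?_) hx
    · exact ((((hasDerivAt_id' (x := y)).sub ((hasDerivAt_pow 3 y).div_const 6)).add ((hasDerivAt_pow 5 y).div_const 120)).sub (Real.hasDerivAt_sin y)).congr_deriv (by push_cast; ring)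
    · have := tc4u y hy
      linarith
  dsimp only at key
  linarith

lemma tc6l (x : ℝ) (hx : 0 ≤ x) : 1 - x ^ 2 / 2 + x ^ 4 / 24 - x ^ 6 / 720 ≤ Real.cos x := by
  have key : 0 ≤ (fun y : ℝ => Real.cos y - (1 - y ^ 2 / 2 + y ^ 4 / 24 - y ^ 6 / 720)) x := by
    refine nonneg_of_deriv (fun y : ℝ => Real.cos y - (1 - y ^ 2 / 2 + y ^ 4 / 24 - y ^ 6 / 720)) (fun y : ℝ => (y - y ^ 3 / 6 + y ^ 5 / 120) - Real.sin y) (by norm_num) (fun y => ?_) (fun y hy => ?_) hx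
    · exact ((Real.hasDerivAt_cos y).sub ((((hasDerivAt_const y (1:ℝ)).sub ((hasDerivAt_pow 2 y).div_const 2)).add ((hasDerivAt_pow 4 y).div_const 24)).sub ((hasDerivAt_pow 6 y).div_const 720))).congr_deriv (by push_cast; ring)
    · have := ts5u y hy
      linarith
  dsimp only at key
  linarith

lemma ts7l (x : ℝ) (hx : 0 ≤ x) : x - x ^ 3 / 6 + x ^ 5 / 120 - x ^ 7 / 5040 ≤ Real.sin x := by
  have key : 0 ≤ (fun y : ℝ => Real.sin y - (y - y ^ 3 / 6 + y ^ 5 / 120 - y ^ 7 / 5040)) x := by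
    refine nonneg_of_deriv (fun y : ℝ => Real.sin y - (y - y ^ 3 / 6 + y ^ 5 / 120 - y ^ 7 / 5040)) (fun y : ℝ => Real.cos y - (1 - y ^ 2 / 2 + y ^ 4 / 24 - y ^ 6 / 720)) (by norm_num) (fun y => ?_) (fun y hy => ?_) hx
    · exact ((Real.hasDerivAt_sin y).sub ((((hasDerivAt_id' (x := y)).sub ((hasDerivAt_pow 3 y).div_const 6)).add ((hasDerivAt_pow 5 y).div_const 120)).sub ((hasDerivAt_pow 7 y).div_const 5040))).congr_deriv (by push_cast; ring)
    · have := tc6l y hy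
      linarith
  dsimp only at key
  linarith

lemma tc8u (x : ℝ) (hx : 0 ≤ x) : Real.cos x ≤ 1 - x ^ 2 / 2 + x ^ 4 / 24 - x ^ 6 / 720 + x ^ 8 / 40320 := by
  have key : 0 ≤ (fun y : ℝ => (1 - y ^ 2 / 2 + y ^ 4 / 24 - y ^ 6 / 720 + y ^ 8 / 40320) - Real.cos y) x := by
    refine nonneg_of_deriv (fun y : ℝ => (1 - y ^ 2 / 2 + y ^ 4 / 24 - y ^ 6 / 720 + y ^ 8 / 40320) - Real.cos y) (fun y : ℝ => Real.sin y - (y - y ^ 3 / 6 + y ^ 5 / 120 - y ^ 7 / 5040)) (by norm_num) (fun y => ?_) (fun y hy => ?_) hx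
    · exact ((((((hasDerivAt_const y (1:ℝ)).sub ((hasDerivAt_pow 2 y).div_const 2)).add ((hasDerivAt_pow 4 y).div_const 24)).sub ((hasDerivAt_pow 6 y).div_const 720)).add ((hasDerivAt_pow 8 y).div_const 40320)).sub (Real.hasDerivAt_cos y)).congr_deriv (by push_cast; ring)
    · have := ts7l y hy
      linarith
  dsimp only at key
  linarith

lemma ts9u (x : ℝ) (hx : 0 ≤ x) : Real.sin x ≤ x - x ^ 3 / 6 + x ^ 5 / 120 - x ^ 7 / 5040 + x ^ 9 / 362880 := by
  have key : 0 ≤ (fun y : ℝ => (y - y ^ 3 / 6 + y ^ 5 / 120 - y ^ 7 / 5040 + y ^ 9 / 362880) - Real.sin y) x := by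
    refine nonneg_of_deriv (fun y : ℝ => (y - y ^ 3 / 6 + y ^ 5 / 120 - y ^ 7 / 5040 + y ^ 9 / 362880) - Real.sin y) (fun y : ℝ => (1 - y ^ 2 / 2 + y ^ 4 / 24 - y ^ 6 / 720 + y ^ 8 / 40320) - Real.cos y) (by norm_num) (fun y => ?_) (fun y hy => ?_) hx
    · exact ((((((hasDerivAt_id' (x := y)).sub ((hasDerivAt_pow 3 y).div_const 6)).add ((hasDerivAt_pow 5 y).div_const 120)).sub ((hasDerivAt_pow 7 y).div_const 5040)).add ((hasDerivAt_pow 9 y).div_const 362880)).sub (Real.hasDerivAt_sin y)).congr_deriv (by push_cast; ring)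
    · have := tc8u y hy
      linarith
  dsimp only at key
  linarith

lemma tc10l (x : ℝ) (hx : 0 ≤ x) : 1 - x ^ 2 / 2 + x ^ 4 / 24 - x ^ 6 / 720 + x ^ 8 / 40320 - x ^ 10 / 3628800 ≤ Real.cos x := by
  have key : 0 ≤ (fun y : ℝ => Real.cos y - (1 - y ^ 2 / 2 + y ^ 4 / 24 - y ^ 6 / 720 + y ^ 8 / 40320 - y ^ 10 / 3628800)) x := by
    refine nonneg_of_deriv (fun y : ℝ => Real.cos y - (1 - y ^ 2 / 2 + y ^ 4 / 24 - y ^ 6 / 720 + y ^ 8 / 40320 - y ^ 10 / 3628800)) (fun y : ℝ => (y - y ^ 3 / 6 + y ^ 5 / 120 - y ^ 7 / 5040 + y ^ 9 / 362880) - Real.sin y) (by norm_num) (fun y => ?_) (fun y hy => ?_) hx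
    · exact ((Real.hasDerivAt_cos y).sub ((((((hasDerivAt_const y (1:ℝ)).sub ((hasDerivAt_pow 2 y).div_const 2)).add ((hasDerivAt_pow 4 y).div_const 24)).sub ((hasDerivAt_pow 6 y).div_const 720)).add ((hasDerivAt_pow 8 y).div_const 40320)).sub ((hasDerivAt_pow 10 y).div_const 3628800))).congr_deriv (by push_cast; ring)
    · have := ts9u y hy
      linarith
  dsimp only at key
  linarith

lemma ts11l (x : ℝ) (hx : 0 ≤ x) : x - x ^ 3 / 6 + x ^ 5 / 120 - x ^ 7 / 5040 + x ^ 9 / 362880 - x ^ 11 / 39916800 ≤ Real.sin x := by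
  have key : 0 ≤ (fun y : ℝ => Real.sin y - (y - y ^ 3 / 6 + y ^ 5 / 120 - y ^ 7 / 5040 + y ^ 9 / 362880 - y ^ 11 / 39916800)) x := by
    refine nonneg_of_deriv (fun y : ℝ => Real.sin y - (y - y ^ 3 / 6 + y ^ 5 / 120 - y ^ 7 / 5040 + y ^ 9 / 362880 - y ^ 11 / 39916800)) (fun y : ℝ => Real.cos y - (1 - y ^ 2 / 2 + y ^ 4 / 24 - y ^ 6 / 720 + y ^ 8 / 40320 - y ^ 10 / 3628800)) (by norm_num) (fun y => ?_) (fun y hy => ?_) hx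
    · exact ((Real.hasDerivAt_sin y).sub ((((((hasDerivAt_id' (x := y)).sub ((hasDerivAt_pow 3 y).div_const 6)).add ((hasDerivAt_pow 5 y).div_const 120)).sub ((hasDerivAt_pow 7 y).div_const 5040)).add ((hasDerivAt_pow 9 y).div_const 362880)).sub ((hasDerivAt_pow 11 y).div_const 39916800))).congr_deriv (by push_cast; ring)
    · have := tc10l y hy
      linarith
  dsimp only at key
  linarith

lemma tc12u (x : ℝ) (hx : 0 ≤ x) : Real.cos x ≤ 1 - x ^ 2 / 2 + x ^ 4 / 24 - x ^ 6 / 720 + x ^ 8 / 40320 - x ^ 10 / 3628800 + x ^ 12 / 479001600 := by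
  have key : 0 ≤ (fun y : ℝ => (1 - y ^ 2 / 2 + y ^ 4 / 24 - y ^ 6 / 720 + y ^ 8 / 40320 - y ^ 10 / 3628800 + y ^ 12 / 479001600) - Real.cos y) x := by
    refine nonneg_of_deriv (fun y : ℝ => (1 - y ^ 2 / 2 + y ^ 4 / 24 - y ^ 6 / 720 + y ^ 8 / 40320 - y ^ 10 / 3628800 + y ^ 12 / 479001600) - Real.cos y) (fun y : ℝ => Real.sin y - (y - y ^ 3 / 6 + y ^ 5 / 120 - y ^ 7 / 5040 + y ^ 9 / 362880 - y ^ 11 / 39916800)) (by norm_num) (fun y => ?_) (fun y hy => ?_) hx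
    · exact ((((((((hasDerivAt_const y (1:ℝ)).sub ((hasDerivAt_pow 2 y).div_const 2)).add ((hasDerivAt_pow 4 y).div_const 24)).sub ((hasDerivAt_pow 6 y).div_const 720)).add ((hasDerivAt_pow 8 y).div_const 40320)).sub ((hasDerivAt_pow 10 y).div_const 3628800)).add ((hasDerivAt_pow 12 y).div_const 479001600)).sub (Real.hasDerivAt_cos y)).congr_deriv (by push_cast; ring)
    · have := ts11l y hy
      linarith
  dsimp only at key
  linarith

lemma ts13u (x : ℝ) (hx : 0 ≤ x) : Real.sin x ≤ x - x ^ 3 / 6 + x ^ 5 / 120 - x ^ 7 / 5040 + x ^ 9 / 362880 - x ^ 11 / 39916800 + x ^ 13 / 6227020800 := by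
  have key : 0 ≤ (fun y : ℝ => (y - y ^ 3 / 6 + y ^ 5 / 120 - y ^ 7 / 5040 + y ^ 9 / 362880 - y ^ 11 / 39916800 + y ^ 13 / 6227020800) - Real.sin y) x := by
    refine nonneg_of_deriv (fun y : ℝ => (y - y ^ 3 / 6 + y ^ 5 / 120 - y ^ 7 / 5040 + y ^ 9 / 362880 - y ^ 11 / 39916800 + y ^ 13 / 6227020800) - Real.sin y) (fun y : ℝ => (1 - y ^ 2 / 2 + y ^ 4 / 24 - y ^ 6 / 720 + y ^ 8 / 40320 - y ^ 10 / 3628800 + y ^ 12 / 479001600) - Real.cos y) (by norm_num) (fun y => ?_) (fun y hy => ?_) hx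
    · exact ((((((((hasDerivAt_id' (x := y)).sub ((hasDerivAt_pow 3 y).div_const 6)).add ((hasDerivAt_pow 5 y).div_const 120)).sub ((hasDerivAt_pow 7 y).div_const 5040)).add ((hasDerivAt_pow 9 y).div_const 362880)).sub ((hasDerivAt_pow 11 y).div_const 39916800)).add ((hasDerivAt_pow 13 y).div_const 6227020800)).sub (Real.hasDerivAt_sin y)).congr_deriv (by push_cast; ring)
    · have := tc12u y hy
      linarith
  dsimp only at key
  linarith

lemma tc14l (x : ℝ) (hx : 0 ≤ x) : 1 - x ^ 2 / 2 + x ^ 4 / 24 - x ^ 6 / 720 + x ^ 8 / 40320 - x ^ 10 / 3628800 + x ^ 12 / 479001600 - x ^ 14 / 87178291200 ≤ Real.cos x := by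
  have key : 0 ≤ (fun y : ℝ => Real.cos y - (1 - y ^ 2 / 2 + y ^ 4 / 24 - y ^ 6 / 720 + y ^ 8 / 40320 - y ^ 10 / 3628800 + y ^ 12 / 479001600 - y ^ 14 / 87178291200)) x := by
    refine nonneg_of_deriv (fun y : ℝ => Real.cos y - (1 - y ^ 2 / 2 + y ^ 4 / 24 - y ^ 6 / 720 + y ^ 8 / 40320 - y ^ 10 / 3628800 + y ^ 12 / 479001600 - y ^ 14 / 87178291200)) (fun y : ℝ => (y - y ^ 3 / 6 + y ^ 5 / 120 - y ^ 7 / 5040 + y ^ 9 / 362880 - y ^ 11 / 39916800 + y ^ 13 / 6227020800) - Real.sin y) (by norm_num) (fun y => ?_) (fun y hy => ?_) hx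
    · exact ((Real.hasDerivAt_cos y).sub ((((((((hasDerivAt_const y (1:ℝ)).sub ((hasDerivAt_pow 2 y).div_const 2)).add ((hasDerivAt_pow 4 y).div_const 24)).sub ((hasDerivAt_pow 6 y).div_const 720)).add ((hasDerivAt_pow 8 y).div_const 40320)).sub ((hasDerivAt_pow 10 y).div_const 3628800)).add ((hasDerivAt_pow 12 y).div_const 479001600)).sub ((hasDerivAt_pow 14 y).div_const 87178291200))).congr_deriv (by push_cast; ring)
    · have := ts13u y hy
      linarith
  dsimp only at key
  linarith

lemma ts15l (x : ℝ) (hx : 0 ≤ x) : x - x ^ 3 / 6 + x ^ 5 / 120 - x ^ 7 / 5040 + x ^ 9 / 362880 - x ^ 11 / 39916800 + x ^ 13 / 6227020800 - x ^ 15 / 1307674368000 ≤ Real.sin x := by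
  have key : 0 ≤ (fun y : ℝ => Real.sin y - (y - y ^ 3 / 6 + y ^ 5 / 120 - y ^ 7 / 5040 + y ^ 9 / 362880 - y ^ 11 / 39916800 + y ^ 13 / 6227020800 - y ^ 15 / 1307674368000)) x := by
    refine nonneg_of_deriv (fun y : ℝ => Real.sin y - (y - y ^ 3 / 6 + y ^ 5 / 120 - y ^ 7 / 5040 + y ^ 9 / 362880 - y ^ 11 / 39916800 + y ^ 13 / 6227020800 - y ^ 15 / 1307674368000)) (fun y : ℝ => Real.cos y - (1 - y ^ 2 / 2 + y ^ 4 / 24 - y ^ 6 / 720 + y ^ 8 / 40320 - y ^ 10 / 3628800 + y ^ 12 / 479001600 - y ^ 14 / 87178291200)) (by norm_num) (fun y => ?_) (fun y hy => ?_) hx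
    · exact ((Real.hasDerivAt_sin y).sub ((((((((hasDerivAt_id' (x := y)).sub ((hasDerivAt_pow 3 y).div_const 6)).add ((hasDerivAt_pow 5 y).div_const 120)).sub ((hasDerivAt_pow 7 y).div_const 5040)).add ((hasDerivAt_pow 9 y).div_const 362880)).sub ((hasDerivAt_pow 11 y).div_const 39916800)).add ((hasDerivAt_pow 13 y).div_const 6227020800)).sub ((hasDerivAt_pow 15 y).div_const 1307674368000))).congr_deriv (by push_cast; ring)
    · have := tc14l y hy
      linarith
  dsimp only at key
  linarith

lemma qpos (t : ℝ) (h0 : 0 ≤ t) (h1 : t ≤ 98697/10000) :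
    0 ≤ 11/690 - 269/57960 * t + 607/1391040 * t^2 - 3419/229521600 * t^3
      + 1919/7161073920 * t^4 - 30053/10025503488000 * t^5 := by
  nlinarith [sq_nonneg (t - 8), sq_nonneg (t-4), mul_nonneg h0 h0, sq_nonneg t,
    mul_nonneg (mul_nonneg h0 h0) h0, sub_nonneg.2 h1, mul_nonneg (sub_nonneg.2 h1) h0,
    mul_nonneg (mul_nonneg (sub_nonneg.2 h1) h0) h0,
    mul_nonneg (sub_nonneg.2 h1) (sq_nonneg (t-8)), mul_nonneg h0 (sq_nonneg (t-8)),
    mul_nonneg (mul_nonneg h0 h0) (sq_nonneg (t-8))]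

theorem cusa_huygens_error_upper (x : ℝ) (hx : x ∈ Set.Ioc 0 π) :
    x - 3 * sin x / (2 + cos x) ≤ (1 / 92) * x ^ 5 := by
  obtain ⟨hx0, hxpi⟩ := hx
  have hxnn : (0:ℝ) ≤ x := hx0.le
  have hc1 : -1 ≤ Real.cos x := Real.neg_one_le_cos x
  have hd : 0 < 2 + Real.cos x := by linarith
  have hs0 : 0 ≤ Real.sin x := Real.sin_nonneg_of_nonneg_of_le_pi hxnn hxpi
  have hpib : π < 3.141593 := Real.pi_lt_d6
  have hx2 : x ^ 2 ≤ 98697/10000 := by nlinarith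
  have hQ := qpos (x ^ 2) (sq_nonneg x) hx2
  have hS := ts15l x hxnn
  have hCu := tc12u x hxnn
  have hCl := tc10l x hxnn
  have hx5 : 0 ≤ x ^ 5 := by positivity
  have h1 : 0 ≤ x * ((1 - x ^ 2 / 2 + x ^ 4 / 24 - x ^ 6 / 720 + x ^ 8 / 40320 - x ^ 10 / 3628800 + x ^ 12 / 479001600) - Real.cos x) := mul_nonneg hxnn (by linarith)
  have h2 : 0 ≤ x ^ 5 * (Real.cos x - (1 - x ^ 2 / 2 + x ^ 4 / 24 - x ^ 6 / 720 + x ^ 8 / 40320 - x ^ 10 / 3628800)) := mul_nonneg hx5 (by linarith)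
  have h3 : 0 ≤ x ^ 5 * (11/690 - 269/57960 * x ^ 2 + 607/1391040 * (x ^ 2)^2
      - 3419/229521600 * (x ^ 2)^3 + 1919/7161073920 * (x ^ 2)^4
      - 30053/10025503488000 * (x ^ 2)^5) := mul_nonneg hx5 hQ
  have key : (x - 1/92 * x ^ 5) * (2 + Real.cos x) ≤ 3 * Real.sin x := by
    nlinarith [hS, h1, h2, h3]
  have hdiv : x - 1/92 * x ^ 5 ≤ 3 * Real.sin x / (2 + Real.cos x) :=
    (le_div_iff₀ hd).mpr key
  linarith
end

section
/- For all x ∈ (0, π/2), 1/(π/2 − x) − 2/π + (1 − 4/π²)·x − (8/π³)·x² < tan(x) < 1/(π/2 − x) − 2/π + (1 − 4/π²)·x − (8/π³)·x² + (1/3 − 16/π⁴)·x³. -/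
/-!
Write `u = π / 2 - x`. Away from the pole the bounds follow from the Maclaurin-type estimates
`x + x³/3 < tan x ≤ x + x³/3 + x⁵/4` (the latter for `x ≤ 1`), because the lower and upper
expressions equal `x + 16x³ / (π³(π - 2x))` and `x + x³/3 + 32x⁴ / (π⁴(π - 2x))`.
Near the pole, `tan x = cot u` and the estimates `1/u - u/3 - u³/30 ≤ cot u < 1/u - u/3`
reduce both bounds to the positivity of a cubic whose coefficients are polynomials in `π`.
All four estimates come from the alternating Taylor bounds for `sin` and `cos` on `[0, ∞)`,
obtained from `cos ≤ 1` by integrating over `[0, x]` again and again.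
-/

open Real Finset
open scoped Nat

noncomputable def cosTaylor (n : ℕ) (x : ℝ) : ℝ :=
  ∑ k ∈ range n, (-1) ^ k * x ^ (2 * k) / (2 * k)!

noncomputable def sinTaylor (n : ℕ) (x : ℝ) : ℝ :=
  ∑ k ∈ range n, (-1) ^ k * x ^ (2 * k + 1) / (2 * k + 1)!

lemma hasDerivAt_sinTaylor (n : ℕ) (x : ℝ) : HasDerivAt (sinTaylor n) (cosTaylor n x) x := by
  unfold sinTaylor cosTaylor
  refine HasDerivAt.fun_sum fun k _ => ?_
  refine (((hasDerivAt_pow (2 * k + 1) x).const_mul ((-1 : ℝ) ^ k)).div_const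
    ((2 * k + 1)! : ℝ)).congr_deriv ?_
  rw [Nat.factorial_succ]
  push_cast
  field_simp

lemma hasDerivAt_cosTaylor_succ (n : ℕ) (x : ℝ) :
    HasDerivAt (cosTaylor (n + 1)) (-sinTaylor n x) x := by
  have hsplit : cosTaylor (n + 1) = fun y =>
      ∑ k ∈ range n, (-1 : ℝ) ^ (k + 1) * y ^ (2 * k + 2) / (2 * k + 2)! + 1 := by
    ext y
    simp [cosTaylor, sum_range_succ', mul_add]
  rw [hsplit, sinTaylor, ← sum_neg_distrib]
  refine (HasDerivAt.fun_sum fun k _ => ?_).add_const 1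
  refine (((hasDerivAt_pow (2 * k + 2) x).const_mul ((-1 : ℝ) ^ (k + 1))).div_const
    ((2 * k + 2)! : ℝ)).congr_deriv ?_
  rw [Nat.factorial_succ (2 * k + 1)]
  push_cast
  field_simp
  ring

lemma nonneg_of_hasDerivAt_of_nonneg {f f' : ℝ → ℝ} (hf : ∀ x, HasDerivAt f (f' x) x)
    (hf' : ∀ x, 0 < x → 0 ≤ f' x) (h0 : f 0 = 0) {x : ℝ} (hx : 0 ≤ x) : 0 ≤ f x := by
  have hmono : MonotoneOn f (Set.Ici 0) :=
    monotoneOn_of_hasDerivWithinAt_nonneg (convex_Ici 0)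
      (fun y _ => (hf y).continuousAt.continuousWithinAt)
      (fun y _ => (hf y).hasDerivWithinAt) (fun y hy => hf' y (by simpa using hy))
  simpa [h0] using hmono Set.self_mem_Ici hx hx

lemma sinTaylor_bound_of_cosTaylor_bound {n : ℕ}
    (h : ∀ t, 0 ≤ t → 0 ≤ (-1) ^ n * (cosTaylor (n + 1) t - cos t)) {x : ℝ} (hx : 0 ≤ x) :
    0 ≤ (-1) ^ n * (sinTaylor (n + 1) x - sin x) :=
  nonneg_of_hasDerivAt_of_nonneg
    (fun y => ((hasDerivAt_sinTaylor (n + 1) y).sub (hasDerivAt_sin y)).const_mul _)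
    (fun y hy => h y hy.le) (by simp [sinTaylor]) hx

lemma cosTaylor_bound_succ_of_sinTaylor_bound {n : ℕ}
    (h : ∀ t, 0 ≤ t → 0 ≤ (-1) ^ n * (sinTaylor (n + 1) t - sin t)) {x : ℝ} (hx : 0 ≤ x) :
    0 ≤ (-1) ^ (n + 1) * (cosTaylor (n + 2) x - cos x) :=
  nonneg_of_hasDerivAt_of_nonneg
    (fun y => ((hasDerivAt_cosTaylor_succ (n + 1) y).sub (hasDerivAt_cos y)).const_mul _)
    (fun y hy => by convert h y hy.le using 1; ring) (by simp [cosTaylor, sum_range_succ']) hx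

lemma cosTaylor_bound (n : ℕ) {x : ℝ} (hx : 0 ≤ x) :
    0 ≤ (-1) ^ n * (cosTaylor (n + 1) x - cos x) := by
  induction n generalizing x with
  | zero => simpa [cosTaylor] using cos_le_one x
  | succ n ih =>
    exact cosTaylor_bound_succ_of_sinTaylor_bound
      (fun _ ht => sinTaylor_bound_of_cosTaylor_bound (fun _ hs => ih hs) ht) hx

lemma sinTaylor_bound (n : ℕ) {x : ℝ} (hx : 0 ≤ x) :
    0 ≤ (-1) ^ n * (sinTaylor (n + 1) x - sin x) :=
  sinTaylor_bound_of_cosTaylor_bound (fun _ ht => cosTaylor_bound n ht) hx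

lemma cos_le_quartic {x : ℝ} (hx : 0 ≤ x) : cos x ≤ 1 - x ^ 2 / 2 + x ^ 4 / 24 := by
  have := cosTaylor_bound 2 hx
  norm_num [cosTaylor, sum_range_succ, Nat.factorial] at this
  linarith

lemma sin_le_quintic {x : ℝ} (hx : 0 ≤ x) : sin x ≤ x - x ^ 3 / 6 + x ^ 5 / 120 := by
  have := sinTaylor_bound 2 hx
  norm_num [sinTaylor, sum_range_succ, Nat.factorial] at this
  linarith

lemma sextic_le_cos {x : ℝ} (hx : 0 ≤ x) : 1 - x ^ 2 / 2 + x ^ 4 / 24 - x ^ 6 / 720 ≤ cos x := by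
  have := cosTaylor_bound 3 hx
  norm_num [cosTaylor, sum_range_succ, Nat.factorial] at this
  linarith

lemma cubic_lt_tan {x : ℝ} (hx₀ : 0 < x) (hx : x < π / 2) : x + x ^ 3 / 3 < tan x := by
  have hcos : 0 < cos x := cos_pos_of_mem_Ioo ⟨by linarith [pi_pos], hx⟩
  have hx2 : x < 2 := hx.trans (by linarith [pi_lt_d2])
  rw [tan_eq_sin_div_cos, lt_div_iff₀ hcos]
  calc (x + x ^ 3 / 3) * cos x ≤ (x + x ^ 3 / 3) * (1 - x ^ 2 / 2 + x ^ 4 / 24) := by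
        gcongr; exact cos_le_quartic hx₀.le
    _ = x - x ^ 3 / 6 - x ^ 5 * (9 - x ^ 2) / 72 := by ring
    _ < x - x ^ 3 / 6 := by
        have : 0 < x ^ 5 * (9 - x ^ 2) := mul_pos (pow_pos hx₀ 5) (by nlinarith)
        linarith
    _ ≤ sin x := sin_ge_sub_cube hx₀.le

lemma tan_le_quintic {x : ℝ} (hx₀ : 0 < x) (hx : x ≤ 1) :
    tan x ≤ x + x ^ 3 / 3 + x ^ 5 / 4 := by
  have hcos : 0 < cos x := cos_pos_of_mem_Ioo ⟨by linarith [pi_pos], by linarith [pi_gt_three]⟩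
  rw [tan_eq_sin_div_cos, div_le_iff₀ hcos]
  calc sin x ≤ x - x ^ 3 / 6 + x ^ 5 / 120 := sin_le_quintic hx₀.le
    _ ≤ (x + x ^ 3 / 3 + x ^ 5 / 4) * (1 - x ^ 2 / 2 + x ^ 4 / 24 - x ^ 6 / 720) := by
        have h5 := pow_pos hx₀ 5
        have hx2 : x ^ 2 ≤ 1 := by nlinarith
        nlinarith [mul_nonneg h5.le (sub_nonneg.2 hx2), pow_pos hx₀ 9, pow_pos hx₀ 11]
    _ ≤ (x + x ^ 3 / 3 + x ^ 5 / 4) * cos x := by gcongr; exact sextic_le_cos hx₀.le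

lemma cot_lt_inv_sub_div_three {u : ℝ} (hu₀ : 0 < u) (hu : u < π / 2) :
    cot u < 1 / u - u / 3 := by
  have hsin : 0 < sin u := sin_pos_of_pos_of_lt_pi hu₀ (by linarith [pi_pos])
  have hu2 : u < 1.6 := hu.trans (by linarith [pi_lt_d2])
  rw [cot_eq_cos_div_sin, div_lt_iff₀ hsin, show 1 / u - u / 3 = (1 - u ^ 2 / 3) / u by field_simp,
    div_mul_eq_mul_div, lt_div_iff₀ hu₀]
  calc cos u * u ≤ (1 - u ^ 2 / 2 + u ^ 4 / 24) * u := by gcongr; exact cos_le_quartic hu₀.le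
    _ < (1 - u ^ 2 / 3) * (u - u ^ 3 / 6) := by nlinarith [pow_pos hu₀ 5]
    _ ≤ (1 - u ^ 2 / 3) * sin u := by
        gcongr
        · nlinarith
        · exact sin_ge_sub_cube hu₀.le

lemma inv_sub_sub_le_cot {u : ℝ} (hu₀ : 0 < u) (hu : u ≤ 1) :
    1 / u - u / 3 - u ^ 3 / 30 ≤ cot u := by
  have hsin : 0 < sin u := sin_pos_of_pos_of_lt_pi hu₀ (by linarith [pi_gt_three])
  have hu2 : u ^ 2 ≤ 1 := by nlinarith
  rw [cot_eq_cos_div_sin, le_div_iff₀ hsin,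
    show 1 / u - u / 3 - u ^ 3 / 30 = (1 - u ^ 2 / 3 - u ^ 4 / 30) / u by field_simp,
    div_mul_eq_mul_div, div_le_iff₀ hu₀]
  calc (1 - u ^ 2 / 3 - u ^ 4 / 30) * sin u
      ≤ (1 - u ^ 2 / 3 - u ^ 4 / 30) * (u - u ^ 3 / 6 + u ^ 5 / 120) := by
        gcongr
        · nlinarith
        · exact sin_le_quintic hu₀.le
    _ ≤ (1 - u ^ 2 / 2 + u ^ 4 / 24 - u ^ 6 / 720) * u := by
        nlinarith [mul_nonneg (pow_pos hu₀ 5).le (sub_nonneg.2 hu2), pow_pos hu₀ 9]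
    _ ≤ cos u * u := by gcongr; exact sextic_le_cos hu₀.le

lemma pi_pow_bounds {n : ℕ} (hn : n ≠ 0) : 3.1415 ^ n < π ^ n ∧ π ^ n < 3.1416 ^ n :=
  ⟨by gcongr; exact pi_gt_d4, by gcongr; exact pi_lt_d4⟩

noncomputable def nenezicZhuLower (x : ℝ) : ℝ :=
  1 / (π / 2 - x) - 2 / π + (1 - 4 / π ^ 2) * x - (8 / π ^ 3) * x ^ 2

noncomputable def nenezicZhuUpper (x : ℝ) : ℝ :=
  nenezicZhuLower x + (1 / 3 - 16 / π ^ 4) * x ^ 3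

lemma nenezicZhuLower_eq {x : ℝ} (hx : x ≠ π / 2) :
    nenezicZhuLower x = x + 16 * x ^ 3 / (π ^ 3 * (π - 2 * x)) := by
  have : π - 2 * x ≠ 0 := fun h => hx (by linarith)
  have : π / 2 - x ≠ 0 := fun h => hx (by linarith)
  unfold nenezicZhuLower
  field_simp [pi_ne_zero]
  ring

lemma nenezicZhuUpper_eq {x : ℝ} (hx : x ≠ π / 2) :
    nenezicZhuUpper x = x + x ^ 3 / 3 + 32 * x ^ 4 / (π ^ 4 * (π - 2 * x)) := by
  have : π - 2 * x ≠ 0 := fun h => hx (by linarith)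
  have : π / 2 - x ≠ 0 := fun h => hx (by linarith)
  unfold nenezicZhuUpper nenezicZhuLower
  field_simp [pi_ne_zero]
  ring

lemma nenezicZhuLower_le_cubic {x : ℝ} (hx₀ : 0 ≤ x) (hx : x ≤ 3 / 4) :
    nenezicZhuLower x ≤ x + x ^ 3 / 3 := by
  obtain ⟨l₁, -⟩ := pi_pow_bounds one_ne_zero
  obtain ⟨l₃, -⟩ := pi_pow_bounds three_ne_zero
  norm_num at l₁ l₃
  rw [nenezicZhuLower_eq (by linarith)]
  have h48 : 48 ≤ π ^ 3 * (π - 2 * x) := by nlinarith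
  have : 16 * x ^ 3 / (π ^ 3 * (π - 2 * x)) ≤ x ^ 3 / 3 := by
    rw [div_le_div_iff₀ (by linarith) (by norm_num)]
    nlinarith [pow_nonneg hx₀ 3]
  linarith

lemma quintic_lt_nenezicZhuUpper {x : ℝ} (hx₀ : 0 < x) (hx : x < π / 2) :
    x + x ^ 3 / 3 + x ^ 5 / 4 < nenezicZhuUpper x := by
  obtain ⟨-, u₆⟩ := pi_pow_bounds (n := 6) (by norm_num)
  norm_num at u₆
  rw [nenezicZhuUpper_eq hx.ne]
  have hd : 0 < π - 2 * x := by linarith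
  have : x * (π - 2 * x) * π ^ 4 < 128 := by
    have : 8 * (x * (π - 2 * x)) ≤ π ^ 2 := by nlinarith [sq_nonneg (π - 4 * x)]
    nlinarith [pow_pos pi_pos 4]
  have : x ^ 5 / 4 < 32 * x ^ 4 / (π ^ 4 * (π - 2 * x)) := by
    rw [div_lt_div_iff₀ (by norm_num) (by positivity)]
    nlinarith [pow_pos hx₀ 4]
  linarith

lemma nenezicZhuLower_lt_inv_sub_sub {x : ℝ} (hx₀ : 3 / 4 ≤ x) (hx : x < π / 2) :
    nenezicZhuLower x < 1 / (π / 2 - x) - (π / 2 - x) / 3 - (π / 2 - x) ^ 3 / 30 := by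
  obtain ⟨u, rfl⟩ : ∃ u, x = π / 2 - u := ⟨π / 2 - x, by ring⟩
  rw [sub_sub_cancel]
  obtain ⟨l₁, u₁⟩ := pi_pow_bounds one_ne_zero
  obtain ⟨l₂, u₂⟩ := pi_pow_bounds two_ne_zero
  obtain ⟨l₃, u₃⟩ := pi_pow_bounds three_ne_zero
  obtain ⟨l₄, u₄⟩ := pi_pow_bounds four_ne_zero
  norm_num at l₁ u₁ l₂ u₂ l₃ u₃ l₄ u₄
  have hu₀ : 0 < u := by linarith
  have hu : u < 0.83 := by linarith
  have c₁ : -17.1 ≤ 2 * π ^ 3 / 3 - 12 * π := by linarith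
  have c₃ : π ^ 3 / 30 ≤ 1.04 := by linarith
  have key : 0 < 6 * π ^ 2 - π ^ 4 / 2 + u * (2 * π ^ 3 / 3 - 12 * π) + 8 * u ^ 2
      - π ^ 3 / 30 * u ^ 3 := by
    nlinarith [mul_le_mul_of_nonneg_left c₁ hu₀.le, mul_le_mul_of_nonneg_left c₃ (pow_pos hu₀ 3).le,
      mul_pos (mul_pos hu₀ hu₀) (sub_pos.2 hu), mul_pos hu₀ (sub_pos.2 hu)]
  have expand : 1 / u - u / 3 - u ^ 3 / 30 - nenezicZhuLower (π / 2 - u)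
      = (6 * π ^ 2 - π ^ 4 / 2 + u * (2 * π ^ 3 / 3 - 12 * π) + 8 * u ^ 2
      - π ^ 3 / 30 * u ^ 3) / π ^ 3 := by
    unfold nenezicZhuLower
    field_simp [pi_ne_zero]
    ring
  have := div_pos key (pow_pos pi_pos 3)
  linarith

lemma inv_sub_div_three_le_nenezicZhuUpper {x : ℝ} (hx₀ : 1 ≤ x) (hx : x < π / 2) :
    1 / (π / 2 - x) - (π / 2 - x) / 3 ≤ nenezicZhuUpper x := by
  obtain ⟨l₁, u₁⟩ := pi_pow_bounds one_ne_zero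
  obtain ⟨l₂, u₂⟩ := pi_pow_bounds two_ne_zero
  obtain ⟨l₃, u₃⟩ := pi_pow_bounds three_ne_zero
  obtain ⟨l₄, u₄⟩ := pi_pow_bounds four_ne_zero
  obtain ⟨l₅, u₅⟩ := pi_pow_bounds (n := 5) (by norm_num)
  norm_num at l₁ u₁ l₂ u₂ l₃ u₃ l₄ u₄ l₅ u₅
  have d₁ : 76.2 ≤ 2 * π ^ 4 - 12 * π ^ 2 := by linarith
  have d₃ : 49.3 ≤ π ^ 4 - 48 := by linarith
  have hx' : 0 ≤ x - 1 := by linarith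
  have key : 0 ≤ π ^ 5 / 2 - 6 * π ^ 3 + (2 * π ^ 4 - 12 * π ^ 2) * x - 24 * π * x ^ 2
      + (π ^ 4 - 48) * x ^ 3 := by
    nlinarith [mul_le_mul_of_nonneg_right d₁ (by linarith : (0:ℝ) ≤ x),
      mul_le_mul_of_nonneg_right d₃ (by positivity : (0:ℝ) ≤ x ^ 3),
      mul_le_mul_of_nonneg_right u₁.le (by positivity : (0:ℝ) ≤ x ^ 2),
      mul_nonneg hx' hx', pow_nonneg hx' 3]
  have : π / 2 - x ≠ 0 := by linarith
  have : π - 2 * x ≠ 0 := by linarith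
  have expand : nenezicZhuUpper x - (1 / (π / 2 - x) - (π / 2 - x) / 3)
      = (π ^ 5 / 2 - 6 * π ^ 3 + (2 * π ^ 4 - 12 * π ^ 2) * x - 24 * π * x ^ 2
      + (π ^ 4 - 48) * x ^ 3) / (3 * π ^ 4) := by
    unfold nenezicZhuUpper nenezicZhuLower
    field_simp [pi_ne_zero]
    ring
  have := div_nonneg key (by positivity : (0:ℝ) ≤ 3 * π ^ 4)
  linarith

lemma tan_eq_cot_pi_div_two_sub (x : ℝ) : tan x = cot (π / 2 - x) := by
  rw [cot_eq_cos_div_sin, cos_pi_div_two_sub, sin_pi_div_two_sub, tan_eq_sin_div_cos]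

lemma nenezicZhuLower_lt_tan {x : ℝ} (hx₀ : 0 < x) (hx : x < π / 2) :
    nenezicZhuLower x < tan x := by
  rcases le_or_gt x (3 / 4) with hsmall | hlarge
  · exact (nenezicZhuLower_le_cubic hx₀.le hsmall).trans_lt
      (cubic_lt_tan hx₀ hx)
  · rw [tan_eq_cot_pi_div_two_sub]
    exact (nenezicZhuLower_lt_inv_sub_sub hlarge.le hx).trans_le
      (inv_sub_sub_le_cot (by linarith) (by linarith [pi_lt_d2]))

lemma tan_lt_nenezicZhuUpper {x : ℝ} (hx₀ : 0 < x) (hx : x < π / 2) :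
    tan x < nenezicZhuUpper x := by
  rcases le_or_gt x 1 with hsmall | hlarge
  · exact (tan_le_quintic hx₀ hsmall).trans_lt
      (quintic_lt_nenezicZhuUpper hx₀ hx)
  · rw [tan_eq_cot_pi_div_two_sub]
    exact (cot_lt_inv_sub_div_three (by linarith) (by linarith)).trans_le
      (inv_sub_div_three_le_nenezicZhuUpper hlarge.le hx)

theorem tan_rational_bounds_2 (x : ℝ) (hx : x ∈ Set.Ioo 0 (π / 2)) :
    1 / (π / 2 - x) - 2 / π + (1 - 4 / π ^ 2) * x - (8 / π ^ 3) * x ^ 2 < tan x ∧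
    tan x < 1 / (π / 2 - x) - 2 / π + (1 - 4 / π ^ 2) * x - (8 / π ^ 3) * x ^ 2 +
      (1 / 3 - 16 / π ^ 4) * x ^ 3 :=
  ⟨nenezicZhuLower_lt_tan hx.1 hx.2, tan_lt_nenezicZhuUpper hx.1 hx.2⟩
end
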